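/- arXiv:1902.01652 — 4 statements merged into one kernel-verified Lean document; each statement's English description precedes it below -/
import Mathlib

section
/- Let S = (A, B, C) with A ∈ ℝ^{n×n}, B ∈ ℝ^{n×m}, C ∈ ℝ^{p×n}, and let Ŝ = (Â, B̂, Ĉ) with Â ∈ ℝ^{r×r}, B̂ ∈ ℝ^{r×m}, Ĉ ∈ ℝ^{p×r} be any reduced system, and let τ ≥ 1. Define the time-limited Gramians P_τ = Σ_{k=1}^{τ} A^{k-1} B Bᵀ (Aᵀ)^{k-1}, P̂_τ = Σ_{k=1}^{τ} Â^{k-1} B̂ B̂ᵀ (Âᵀ)^{k-1}, and the cross matrix Y = Σ_{j=1}^{τ} A^{j-1} B B̂ᵀ (Âᵀ)^{j-1}. Set ε² = trace(C P_τ Cᵀ + Ĉ P̂_τ Ĉᵀ − 2 C Y Ĉᵀ). Then ε² ≥ 0, and for every input u : ℕ → ℝ^m, with outputs y(k) = Σ_{j=0}^{k} h(k−j) u(j) and ŷ(k) = Σ_{j=0}^{k} ĥ(k−j) u(j), it holds that max_{k = 0, 1, …, τ} ‖y(k) − ŷ(k)‖₂ ≤ ε · (Σ_{j=0}^{τ}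 ‖u(j)‖₂²)^{1/2}. -/
/-!
The difference of the two systems has impulse response `h - ĥ`, and expanding the trace shows
that `ε²` is its energy `∑_{k=1}^{τ} ‖h k - ĥ k‖_F²` over the horizon (in particular `ε² ≥ 0`).
The output error at time `k ≤ τ` is the convolution of `h - ĥ` with `u`, so Cauchy–Schwarz bounds
its squared norm by the energy of `h - ĥ` up to time `k` (at most `ε²`, since `h 0 = ĥ 0 = 0`)
times the input energy up to time `k`.
-/

open Matrix Finset

namespace Matrix

variable {ι l m n n' o R : Type*}

theorem trace_mul_transpose_self [Fintype m] [Fintype n] [CommSemiring R] (M : Matrix m n R) :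
    trace (M * Mᵀ) = ∑ i, ∑ j, M i j ^ 2 := by
  simp only [trace, diag, mul_apply, transpose_apply, sq]

theorem trace_sub_mul_transpose_sub_self [Fintype m] [Fintype n] [CommRing R]
    (M N : Matrix m n R) :
    trace ((M - N) * (M - N)ᵀ) = trace (M * Mᵀ + N * Nᵀ - (2 : R) • (M * Nᵀ)) := by
  have hsymm : trace (N * Mᵀ) = trace (M * Nᵀ) := by
    rw [← trace_transpose, transpose_mul, transpose_transpose]
  simp only [transpose_sub, Matrix.sub_mul, Matrix.mul_sub, trace_sub, trace_add, trace_smul,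
    hsymm, smul_eq_mul]
  ring

theorem mul_sum_pow_mul_mul_transpose_pow_mul_transpose [Fintype l] [Fintype n] [Fintype n']
    [DecidableEq n] [DecidableEq n'] [CommSemiring R] (s : Finset ι) (e : ι → ℕ)
    (A : Matrix n n R) (B : Matrix n l R) (C : Matrix m n R)
    (A' : Matrix n' n' R) (B' : Matrix n' l R) (C' : Matrix o n' R) :
    C * (∑ k ∈ s, A ^ e k * B * B'ᵀ * A'ᵀ ^ e k) * C'ᵀ =
      ∑ k ∈ s, C * A ^ e k * B * (C' * A' ^ e k * B')ᵀ := by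
  rw [Matrix.mul_sum, Matrix.sum_mul]
  refine sum_congr rfl fun k _ => ?_
  simp only [transpose_mul, transpose_pow, Matrix.mul_assoc]

theorem trace_gramian_error_eq_sum_sq_markov_sub [Fintype l] [Fintype m] [Fintype n] [Fintype n']
    [DecidableEq n] [DecidableEq n'] [CommRing R]
    (s : Finset ι) (e : ι → ℕ) (A : Matrix n n R) (B : Matrix n l R) (C : Matrix m n R)
    (A' : Matrix n' n' R) (B' : Matrix n' l R) (C' : Matrix m n' R) :
    trace (C * (∑ k ∈ s, A ^ e k * B * Bᵀ * Aᵀ ^ e k) * Cᵀ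
        + C' * (∑ k ∈ s, A' ^ e k * B' * B'ᵀ * A'ᵀ ^ e k) * C'ᵀ
        - (2 : R) • (C * (∑ k ∈ s, A ^ e k * B * B'ᵀ * A'ᵀ ^ e k) * C'ᵀ)) =
      ∑ k ∈ s, ∑ i, ∑ j, (C * A ^ e k * B - C' * A' ^ e k * B') i j ^ 2 := by
  simp only [mul_sum_pow_mul_mul_transpose_pow_mul_transpose, smul_sum, ← sum_add_distrib,
    ← sum_sub_distrib, trace_sum, ← trace_sub_mul_transpose_sub_self, trace_mul_transpose_self]

theorem sum_sq_sum_mulVec_le [Fintype m] [Fintype n] [CommRing R]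
    [LinearOrder R] [IsStrictOrderedRing R] (s : Finset ι) (M : ι → Matrix m n R)
    (v : ι → n → R) :
    ∑ i, (∑ j ∈ s, M j *ᵥ v j) i ^ 2 ≤
      (∑ j ∈ s, ∑ i, ∑ a, M j i a ^ 2) * ∑ j ∈ s, ∑ a, v j a ^ 2 := by
  have hrow : ∀ i, (∑ j ∈ s, M j *ᵥ v j) i ^ 2 ≤
      (∑ j ∈ s, ∑ a, M j i a ^ 2) * ∑ j ∈ s, ∑ a, v j a ^ 2 := fun i => by
    simpa only [Finset.sum_apply, mulVec, dotProduct, sum_product] using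
      sum_mul_sq_le_sq_mul_sq (s ×ˢ univ) (fun x => M x.1 i x.2) (fun x => v x.1 x.2)
  calc ∑ i, (∑ j ∈ s, M j *ᵥ v j) i ^ 2
      ≤ ∑ i, (∑ j ∈ s, ∑ a, M j i a ^ 2) * ∑ j ∈ s, ∑ a, v j a ^ 2 :=
        sum_le_sum fun i _ => hrow i
    _ = (∑ j ∈ s, ∑ i, ∑ a, M j i a ^ 2) * ∑ j ∈ s, ∑ a, v j a ^ 2 := by
      rw [← sum_mul, sum_comm]

end Matrix

theorem Finset.sum_range_succ_reflect_le_sum_Icc {M : Type*} [AddCommMonoid M] [PartialOrder M]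
    [IsOrderedAddMonoid M] {f : ℕ → M} (h0 : f 0 = 0) (hf : ∀ l, 0 ≤ f l) {k τ : ℕ}
    (hk : k ≤ τ) : ∑ j ∈ range (k + 1), f (k - j) ≤ ∑ l ∈ Icc 1 τ, f l := by
  have hreflect := sum_range_reflect f (k + 1)
  rw [add_tsub_cancel_right] at hreflect
  calc ∑ j ∈ range (k + 1), f (k - j) = ∑ l ∈ range (k + 1), f l := hreflect
    _ ≤ ∑ l ∈ insert 0 (Icc 1 τ), f l := by
      refine sum_le_sum_of_subset_of_nonneg (fun l hl => ?_) fun l _ _ => hf l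
      simp only [mem_range, mem_insert, mem_Icc] at hl ⊢
      omega
    _ = ∑ l ∈ Icc 1 τ, f l := by rw [sum_insert (by simp), h0, zero_add]

theorem output_error_bound_gramian_form_general
    {n m p r : ℕ} (τ : ℕ)
    (A : Matrix (Fin n) (Fin n) ℝ) (B : Matrix (Fin n) (Fin m) ℝ)
    (C : Matrix (Fin p) (Fin n) ℝ)
    (Ah : Matrix (Fin r) (Fin r) ℝ) (Bh : Matrix (Fin r) (Fin m) ℝ)
    (Ch : Matrix (Fin p) (Fin r) ℝ)
    (P : Matrix (Fin n) (Fin n) ℝ) (Ph : Matrix (Fin r) (Fin r) ℝ)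
    (Y : Matrix (Fin n) (Fin r) ℝ)
    (hP : P = ∑ k ∈ Finset.Icc 1 τ, A ^ (k - 1) * B * Bᵀ * (Aᵀ) ^ (k - 1))
    (hPh : Ph = ∑ k ∈ Finset.Icc 1 τ, Ah ^ (k - 1) * Bh * Bhᵀ * (Ahᵀ) ^ (k - 1))
    (hY : Y = ∑ j ∈ Finset.Icc 1 τ, A ^ (j - 1) * B * Bhᵀ * (Ahᵀ) ^ (j - 1))
    (ε2 : ℝ)
    (hε2 : ε2 = Matrix.trace (C * P * Cᵀ + Ch * Ph * Chᵀ - (2 : ℝ) • (C * Y * Chᵀ)))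
    (h hh : ℕ → Matrix (Fin p) (Fin m) ℝ)
    (hImp0 : h 0 = 0) (hImp : ∀ k, 1 ≤ k → h k = C * A ^ (k - 1) * B)
    (hhImp0 : hh 0 = 0) (hhImp : ∀ k, 1 ≤ k → hh k = Ch * Ah ^ (k - 1) * Bh)
    (u : ℕ → Fin m → ℝ)
    (y yh : ℕ → Fin p → ℝ)
    (hy : ∀ k, y k = ∑ j ∈ Finset.range (k + 1), (h (k - j)) *ᵥ (u j))
    (hyh : ∀ k, yh k = ∑ j ∈ Finset.range (k + 1), (hh (k - j)) *ᵥ (u j)) :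
    0 ≤ ε2 ∧
    ∀ k ≤ τ,
      Real.sqrt (∑ i, (y k i - yh k i) ^ 2) ≤
        Real.sqrt ε2 * Real.sqrt (∑ j ∈ Finset.range (τ + 1), ∑ i, (u j i) ^ 2) := by
  set E : ℕ → Matrix (Fin p) (Fin m) ℝ := fun k => h k - hh k
  have hε2E : ε2 = ∑ k ∈ Icc 1 τ, ∑ i, ∑ a, E k i a ^ 2 := by
    rw [hε2, hP, hPh, hY, trace_gramian_error_eq_sum_sq_markov_sub]
    refine sum_congr rfl fun k hk => ?_
    simp only [E, hImp k (mem_Icc.mp hk).1, hhImp k (mem_Icc.mp hk).1]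
  have hε2_nonneg : 0 ≤ ε2 := hε2E ▸ by positivity
  refine ⟨hε2_nonneg, fun k hk => ?_⟩
  have hdiff : y k - yh k = ∑ j ∈ range (k + 1), E (k - j) *ᵥ u j := by
    rw [hy, hyh, ← sum_sub_distrib]
    simp only [E, sub_mulVec]
  have hsq : ∑ i, (y k i - yh k i) ^ 2 ≤ ε2 * ∑ j ∈ range (τ + 1), ∑ i, u j i ^ 2 := calc
    ∑ i, (y k i - yh k i) ^ 2 = ∑ i, (y k - yh k) i ^ 2 := rfl
    _ ≤ (∑ j ∈ range (k + 1), ∑ i, ∑ a, E (k - j) i a ^ 2) *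
          ∑ j ∈ range (k + 1), ∑ a, u j a ^ 2 := hdiff ▸ sum_sq_sum_mulVec_le _ _ _
    _ ≤ ε2 * ∑ j ∈ range (τ + 1), ∑ i, u j i ^ 2 := by
      refine mul_le_mul ?_ ?_ (by positivity) hε2_nonneg
      · rw [hε2E]
        exact sum_range_succ_reflect_le_sum_Icc (f := fun l => ∑ i, ∑ a, E l i a ^ 2)
          (by simp [E, hImp0, hhImp0]) (fun _ => by positivity) hk
      · exact sum_le_sum_of_subset_of_nonneg (range_subset_range.mpr (by omega))
          fun _ _ _ => by positivity
  rw [← Real.sqrt_mul hε2_nonneg]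
  exact Real.sqrt_le_sqrt hsq

/-- A priori output error bound for any reduced order model.
With time-limited Gramians `P_τ`, `P̂_τ` and cross matrix `Y`, the quantity
`ε² = trace(C P_τ Cᵀ + Ĉ P̂_τ Ĉᵀ − 2 C Y Ĉᵀ)` is nonnegative and
`max_{0 ≤ k ≤ τ} ‖y(k) − ŷ(k)‖₂ ≤ ε (Σ_{j=0}^{τ} ‖u(j)‖₂²)^{1/2}`. -/
theorem output_error_bound_gramian_form
    {n m p r : ℕ} (τ : ℕ) (hτ : 1 ≤ τ)
    (A : Matrix (Fin n) (Fin n) ℝ) (B : Matrix (Fin n) (Fin m) ℝ)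
    (C : Matrix (Fin p) (Fin n) ℝ)
    (Ah : Matrix (Fin r) (Fin r) ℝ) (Bh : Matrix (Fin r) (Fin m) ℝ)
    (Ch : Matrix (Fin p) (Fin r) ℝ)
    (P : Matrix (Fin n) (Fin n) ℝ) (Ph : Matrix (Fin r) (Fin r) ℝ)
    (Y : Matrix (Fin n) (Fin r) ℝ)
    (hP : P = ∑ k ∈ Finset.Icc 1 τ, A ^ (k - 1) * B * Bᵀ * (Aᵀ) ^ (k - 1))
    (hPh : Ph = ∑ k ∈ Finset.Icc 1 τ, Ah ^ (k - 1) * Bh * Bhᵀ * (Ahᵀ) ^ (k - 1))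
    (hY : Y = ∑ j ∈ Finset.Icc 1 τ, A ^ (j - 1) * B * Bhᵀ * (Ahᵀ) ^ (j - 1))
    (ε2 : ℝ)
    (hε2 : ε2 = Matrix.trace (C * P * Cᵀ + Ch * Ph * Chᵀ - (2 : ℝ) • (C * Y * Chᵀ)))
    (h hh : ℕ → Matrix (Fin p) (Fin m) ℝ)
    (hImp0 : h 0 = 0) (hImp : ∀ k, 1 ≤ k → h k = C * A ^ (k - 1) * B)
    (hhImp0 : hh 0 = 0) (hhImp : ∀ k, 1 ≤ k → hh k = Ch * Ah ^ (k - 1) * Bh)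
    (u : ℕ → Fin m → ℝ)
    (y yh : ℕ → Fin p → ℝ)
    (hy : ∀ k, y k = ∑ j ∈ Finset.range (k + 1), (h (k - j)) *ᵥ (u j))
    (hyh : ∀ k, yh k = ∑ j ∈ Finset.range (k + 1), (hh (k - j)) *ᵥ (u j)) :
    0 ≤ ε2 ∧
    ∀ k ≤ τ,
      Real.sqrt (∑ i, (y k i - yh k i) ^ 2) ≤
        Real.sqrt ε2 * Real.sqrt (∑ j ∈ Finset.range (τ + 1), ∑ i, (u j i) ^ 2) :=
  output_error_bound_gramian_form_general τ A B C Ah Bh Ch P Ph Y hP hPh hY ε2 hε2 h hh hImp0 hImp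
    hhImp0 hhImp u y yh hy hyh
end

section
/- Let A₁₁ ∈ ℝ^{r×r}, let Σ₁ ∈ ℝ^{r×r} be a symmetric positive definite matrix, and let Q ∈ ℝ^{r×r} be symmetric positive semidefinite such that A₁₁ Σ₁ A₁₁ᵀ − Σ₁ + Q = 0. Assume the pair (A₁₁, Q) is controllable, i.e., the only vector v ∈ ℂ^r satisfying v* A₁₁^k Q = 0 for all k ∈ ℕ is v = 0. Then every complex eigenvalue μ of A₁₁ satisfies |μ| < 1, i.e., A₁₁ is stable. -/
/-!
Let `w ≠ 0` be a left eigenvector, `w* A = μ w*`. Testing the Stein equation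
`A Σ Aᴴ - Σ + Q = 0` against `w` gives `w* Q w = (1 - |μ|²) w* Σ w`. If `|μ| ≥ 1` the right-hand
side is `≤ 0`, so `w* Q w = 0`, hence `w* Q = 0` and `w* Aᵏ Q = μᵏ w* Q = 0` for every `k`,
contradicting controllability. Complexification preserves positive semidefiniteness because a
real positive semidefinite matrix has the form `Bᵀ B`.
-/

open Matrix

open scoped ComplexOrder MatrixOrder

namespace Matrix

variable {n : Type*} [Fintype n]

theorem exists_vecMul_eq_smul_of_mem_spectrum {K : Type*} [Field K] [DecidableEq n]
    {M : Matrix n n K} {μ : K} (hμ : μ ∈ spectrum K M) : ∃ w ≠ 0, w ᵥ* M = μ • w := by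
  rw [spectrum.mem_iff, isUnit_iff_isUnit_det, isUnit_iff_ne_zero, not_not] at hμ
  obtain ⟨w, hw0, hw⟩ := exists_vecMul_eq_zero_iff.mpr hμ
  refine ⟨w, hw0, ?_⟩
  rwa [vecMul_sub, sub_eq_zero, Algebra.algebraMap_eq_smul_one, vecMul_smul, vecMul_one,
    eq_comm] at hw

theorem vecMul_pow_eq_pow_smul {R : Type*} [CommSemiring R] [DecidableEq n] {M : Matrix n n R}
    {μ : R} {w : n → R} (hw : w ᵥ* M = μ • w) (k : ℕ) : w ᵥ* M ^ k = μ ^ k • w := by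
  induction k with
  | zero => simp
  | succ k ih => rw [pow_succ, ← vecMul_vecMul, ih, smul_vecMul, hw, smul_smul, pow_succ]

theorem PosSemidef.map_ofReal [DecidableEq n] {S : Matrix n n ℝ} (hS : S.PosSemidef) :
    (S.map Complex.ofReal).PosSemidef := by
  obtain ⟨B, rfl⟩ := CStarAlgebra.nonneg_iff_eq_star_mul_self.mp hS.nonneg
  convert posSemidef_conjTranspose_mul_self (B.map Complex.ofReal) using 1
  rw [star_eq_conjTranspose, ← conjTranspose_map _ fun _ ↦ by simp]
  exact Matrix.map_mul (f := Complex.ofRealHom)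

variable {𝕜 : Type*} [RCLike 𝕜] {M S Q : Matrix n n 𝕜}

theorem star_dotProduct_mul_mul_conjTranspose_mulVec {x : n → 𝕜} {μ : 𝕜}
    (hx : star x ᵥ* M = μ • star x) :
    star x ⬝ᵥ (M * S * Mᴴ) *ᵥ x = (‖μ‖ ^ 2 : 𝕜) * (star x ⬝ᵥ S *ᵥ x) := by
  have hMx : Mᴴ *ᵥ x = star μ • x := by
    rw [← star_star x, ← star_vecMul, hx, star_smul, star_star]
  rw [← mulVec_mulVec, hMx, ← mulVec_mulVec, dotProduct_mulVec, hx, mulVec_smul,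
    smul_dotProduct, dotProduct_smul, smul_eq_mul, smul_eq_mul,
    ← mul_assoc, RCLike.star_def, RCLike.mul_conj]

theorem norm_lt_one_of_stein_of_controllable [DecidableEq n] (hS : S.PosSemidef)
    (hQ : Q.PosSemidef) (hstein : M * S * Mᴴ - S + Q = 0)
    (hctrb : ∀ v : n → 𝕜, (∀ k : ℕ, star v ᵥ* (M ^ k * Q) = 0) → v = 0) {μ : 𝕜}
    (hμ : μ ∈ spectrum 𝕜 M) : ‖μ‖ < 1 := by
  obtain ⟨w, hw0, hw⟩ := exists_vecMul_eq_smul_of_mem_spectrum hμ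
  set x := star w
  have hx : star x ᵥ* M = μ • star x := by simpa [x] using hw
  have hq : star x ⬝ᵥ Q *ᵥ x = ((1 - ‖μ‖ ^ 2 : ℝ) : 𝕜) * (star x ⬝ᵥ S *ᵥ x) := by
    have := congrArg (fun N ↦ star x ⬝ᵥ N *ᵥ x) hstein
    simp only [add_mulVec, sub_mulVec, dotProduct_add, dotProduct_sub, zero_mulVec,
      dotProduct_zero, star_dotProduct_mul_mul_conjTranspose_mulVec hx] at this
    push_cast
    linear_combination this
  by_contra! hμ1
  have hq0 : star x ⬝ᵥ Q *ᵥ x = 0 := by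
    refine le_antisymm ?_ (hQ.dotProduct_mulVec_nonneg x)
    rw [hq]
    refine mul_nonpos_of_nonpos_of_nonneg ?_ (hS.dotProduct_mulVec_nonneg x)
    exact RCLike.ofReal_nonpos.mpr (by nlinarith)
  have hxQ : star x ᵥ* Q = 0 := by
    rw [← hQ.isHermitian.eq, ← star_mulVec, (hQ.dotProduct_mulVec_zero_iff x).mp hq0, star_zero]
  refine hw0 (star_eq_zero.mp (hctrb x fun k ↦ ?_))
  rw [← vecMul_vecMul, vecMul_pow_eq_pow_smul hx, smul_vecMul, hxQ, smul_zero]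

end Matrix

/-- Stability preservation (Proposition 3.1 of the paper).
If `Σ₁` is symmetric positive definite, `Q` is symmetric positive semidefinite,
`A₁₁ Σ₁ A₁₁ᵀ − Σ₁ + Q = 0`, and the pair `(A₁₁, Q)` is controllable (the only
`v ∈ ℂ^r` with `v* A₁₁^k Q = 0` for all `k` is `v = 0`), then every complex
eigenvalue `μ` of `A₁₁` satisfies `|μ| < 1`. -/
theorem tlbt_stability_preservation
    {r : ℕ}
    (A11 Sg1 Q : Matrix (Fin r) (Fin r) ℝ)
    (hSg1 : Sg1.PosDef) (hQ : Q.PosSemidef)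
    (heq : A11 * Sg1 * A11ᵀ - Sg1 + Q = 0)
    (hctrb : ∀ v : Fin r → ℂ,
      (∀ k : ℕ,
        Matrix.vecMul (star v) ((A11.map Complex.ofReal) ^ k * Q.map Complex.ofReal) = 0) →
      v = 0) :
    ∀ μ ∈ spectrum ℂ (A11.map Complex.ofReal), ‖μ‖ < 1 := by
  intro μ hμ
  refine norm_lt_one_of_stein_of_controllable hSg1.posSemidef.map_ofReal hQ.map_ofReal ?_ hctrb hμ
  rw [← conjTranspose_map _ fun _ ↦ by simp, conjTranspose_eq_transpose_of_trivial]
  have := congrArg Complex.ofRealHom.mapMatrix heq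
  rwa [map_add, map_sub, map_mul, map_mul, map_zero] at this
end

section
/- Let A ∈ ℝ^{n×n}, B ∈ ℝ^{n×m}, C ∈ ℝ^{p×n} with A stable (all complex eigenvalues of modulus < 1), and suppose the system is balanced: with Σ_∞ = diag(σ₁, …, σ_n), both A Σ_∞ Aᵀ − Σ_∞ + B Bᵀ = 0 and Aᵀ Σ_∞ A − Σ_∞ + Cᵀ C = 0 hold. Partition A = [[A₁₁, A₁₂],[A₂₁, A₂₂]], B = [B₁; B₂], C = [C₁, C₂], Σ_∞ = diag(Σ₁,∞, Σ₂,∞) with leading blocks of size r, write A_{:2} = [A₁₂; A₂₂], and assume A₁₁ is also stable. Let Z_∞ = Σ_{j=1}^{∞} (Aᵀ)^{j-1} Cᵀ C₁ A₁₁^{j-1} (the series converges). Then the squared infinite-horizon h₂ error of the balanced-truncation reduced model Ŝ = (A₁₁, B₁, C₁) satisfies Σ_{j=1}^{∞} ‖C A^{j-1} B − C₁ A₁₁^{j-1} B₁‖_F² ≤ trace(C₂ Σ₂,∞ C₂ᵀ + 2 A₁₂ Σ₂,∞ A_{:2}ᵀ Z_∞). -/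
/-!
Stability of `A` and `A₁₁` makes every Gramian series converge geometrically, and uniqueness for
the Stein equation identifies `Σ` with the observability Gramian `∑ (Aᵀ)ᵏ CᵀC Aᵏ`; in particular
`Σ ≥ 0`. Expanding the squared error termwise gives `tr(Σ BBᵀ) - 2 tr(Z B₁Bᵀ) + tr(Q̂ B₁B₁ᵀ)`,
where `Q̂` is the observability Gramian of `(A₁₁, C₁)`. Substituting the first block row of the
controllability equation and the Stein equations satisfied by `Z` and `Q̂`, the terms
`tr(C₁Σ₁C₁ᵀ)` cancel, leaving `tr(C₂Σ₂C₂ᵀ) + 2 tr(A₁₂Σ₂A_{:2}ᵀZ) - tr(A₁₂ᵀQ̂A₁₂Σ₂)`, and the last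
trace is nonnegative since `A₁₂ᵀQ̂A₁₂` is again a Gramian.
-/

open Matrix Filter Topology
open scoped NNReal ENNReal

theorem eventually_norm_pow_le_of_spectralRadius_lt {𝔸 : Type*} [NormedRing 𝔸]
    [NormedAlgebra ℂ 𝔸] [CompleteSpace 𝔸] {a : 𝔸} {ρ : ℝ≥0} (h : spectralRadius ℂ a < ρ) :
    ∀ᶠ k : ℕ in atTop, ‖a ^ k‖ ≤ ρ ^ k := by
  filter_upwards
    [(spectrum.pow_nnnorm_pow_one_div_tendsto_nhds_spectralRadius a).eventually_lt_const h,
    eventually_ge_atTop 1] with k hk hk1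
  have hk0 : (k : ℝ) ≠ 0 := by positivity
  have := ENNReal.rpow_le_rpow hk.le (by positivity : (0 : ℝ) ≤ k)
  rw [← ENNReal.rpow_mul, one_div_mul_cancel hk0, ENNReal.rpow_one, ENNReal.rpow_natCast] at this
  exact_mod_cast this

section MatrixSums

variable {ι l n m o R : Type*} [Fintype n] [Fintype m] [Ring R] [TopologicalSpace R]
  [IsTopologicalRing R] {f : ι → Matrix n m R} {X : Matrix n m R}

theorem HasSum.matrix_mul_mul (h : HasSum f X) (P : Matrix l n R) (Q : Matrix m o R) :
    HasSum (fun k => P * f k * Q) (P * X * Q) :=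
  h.map (AddMonoidHom.mk' (fun Y : Matrix n m R => P * Y * Q) fun Y₁ Y₂ => by
      rw [Matrix.mul_add, Matrix.add_mul])
    ((continuous_const.matrix_mul continuous_id).matrix_mul continuous_const)

theorem HasSum.matrix_trace_mul (h : HasSum f X) (N : Matrix m n R) :
    HasSum (fun k => trace (f k * N)) (trace (X * N)) :=
  h.map (AddMonoidHom.mk' (fun Y : Matrix n m R => trace (Y * N)) fun Y₁ Y₂ => by
      rw [Matrix.add_mul, trace_add])
    (continuous_id.matrix_mul continuous_const).matrix_trace

end MatrixSums

section Stein

variable {n m R : Type*} [Fintype n] [Fintype m] [DecidableEq n] [DecidableEq m] [Ring R]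
  {M : Matrix n n R} {N : Matrix m m R} {X : Matrix n m R}

theorem Matrix.pow_mul_mul_pow_of_mul_mul_eq (h : M * X * N = X) (k : ℕ) :
    M ^ k * X * N ^ k = X := by
  induction k with
  | zero => simp
  | succ k ih =>
    calc M ^ (k + 1) * X * N ^ (k + 1) = M ^ k * (M * X * N) * N ^ k := by
          rw [pow_succ, pow_succ']; simp only [Matrix.mul_assoc]
      _ = X := by rw [h, ih]

theorem HasSum.stein [TopologicalSpace R] [IsTopologicalRing R] [T2Space R] {T : Matrix n m R}
    (h : HasSum (fun k : ℕ => M ^ k * X * N ^ k) T) : M * T * N = T - X := by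
  have hshift : HasSum (fun k : ℕ => M ^ (k + 1) * X * N ^ (k + 1)) (M * T * N) := by
    convert h.matrix_mul_mul M N using 2 with k
    rw [pow_succ', pow_succ]
    simp only [Matrix.mul_assoc]
  simpa using hshift.unique ((hasSum_nat_add_iff' 1).mpr h)

end Stein

namespace Matrix

variable {n m : Type*} [Fintype n] [DecidableEq n] [Fintype m] [DecidableEq m]

def IsSchurStable (A : Matrix n n ℝ) : Prop :=
  ∀ μ ∈ spectrum ℂ (A.map Complex.ofReal), ‖μ‖ < 1

section Frobenius

attribute [local instance] Matrix.frobeniusNormedAddCommGroup Matrix.frobeniusNormedSpace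
  Matrix.frobeniusNormedRing Matrix.frobeniusNormedAlgebra

theorem IsSchurStable.spectralRadius_lt_one {A : Matrix n n ℝ} (hA : A.IsSchurStable) :
    spectralRadius ℂ (A.map Complex.ofReal) < 1 := by
  rcases (spectrum ℂ (A.map Complex.ofReal)).eq_empty_or_nonempty with he | hne
  · simp [spectralRadius, he]
  · exact_mod_cast spectrum.spectralRadius_lt_of_forall_lt_of_nonempty hne
      (r := 1) fun μ hμ => by exact_mod_cast hA μ hμ

theorem IsSchurStable.exists_eventually_norm_pow_le {A : Matrix n n ℝ} (hA : A.IsSchurStable) :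
    ∃ ρ : ℝ, 0 ≤ ρ ∧ ρ < 1 ∧ ∀ᶠ k : ℕ in atTop, ‖A ^ k‖ ≤ ρ ^ k := by
  obtain ⟨ρ, hAρ, hρ⟩ := ENNReal.lt_iff_exists_nnreal_btwn.mp hA.spectralRadius_lt_one
  refine ⟨ρ, ρ.coe_nonneg, by exact_mod_cast hρ, ?_⟩
  filter_upwards [eventually_norm_pow_le_of_spectralRadius_lt hAρ] with k hk
  have hmap : A.map Complex.ofReal ^ k = (A ^ k).map Complex.ofReal :=
    (map_pow Complex.ofRealHom.mapMatrix A k).symm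
  rwa [hmap, frobenius_norm_map_eq _ _ Complex.norm_real] at hk

theorem IsSchurStable.summable_transpose_pow_mul_mul_pow {P : Matrix n n ℝ} {Q : Matrix m m ℝ}
    (hP : P.IsSchurStable) (hQ : Q.IsSchurStable) (X : Matrix n m ℝ) :
    Summable fun k : ℕ => (Pᵀ) ^ k * X * Q ^ k := by
  obtain ⟨ρ, hρ0, hρ1, hρ⟩ := hP.exists_eventually_norm_pow_le
  obtain ⟨τ, hτ0, hτ1, hτ⟩ := hQ.exists_eventually_norm_pow_le
  have hgeom : Summable fun k : ℕ => ‖X‖ * (ρ * τ) ^ k :=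
    (summable_geometric_of_lt_one (by positivity)
      (mul_lt_one_of_nonneg_of_lt_one_left hρ0 hρ1 hτ1.le)).mul_left _
  refine hgeom.of_norm_bounded_eventually ?_
  rw [Nat.cofinite_eq_atTop]
  filter_upwards [hρ, hτ] with k hPk hQk
  calc ‖(Pᵀ) ^ k * X * Q ^ k‖ ≤ ‖P ^ k‖ * ‖X‖ * ‖Q ^ k‖ := by
        rw [← transpose_pow, ← frobenius_norm_transpose (P ^ k)]
        exact (frobenius_norm_mul _ _).trans
          (mul_le_mul_of_nonneg_right (frobenius_norm_mul _ _) (norm_nonneg _))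
    _ ≤ ρ ^ k * ‖X‖ * τ ^ k := by gcongr
    _ = ‖X‖ * (ρ * τ) ^ k := by ring

end Frobenius

theorem IsSchurStable.hasSum_of_stein {A X Y : Matrix n n ℝ} (hA : A.IsSchurStable)
    (h : Aᵀ * X * A - X + Y = 0) : HasSum (fun k : ℕ => (Aᵀ) ^ k * Y * A ^ k) X := by
  obtain ⟨T, hT⟩ := hA.summable_transpose_pow_mul_mul_pow hA Y
  have hD : Aᵀ * (X - T) * A = X - T := by
    rw [Matrix.mul_sub, Matrix.sub_mul, hT.stein, ← sub_eq_zero, ← h]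
    abel
  have hD0 : X - T = 0 :=
    tendsto_nhds_unique
      (tendsto_const_nhds.congr fun k => (pow_mul_mul_pow_of_mul_mul_eq hD k).symm)
      (hA.summable_transpose_pow_mul_mul_pow hA (X - T)).tendsto_atTop_zero
  rwa [sub_eq_zero.mp hD0]

end Matrix

section Gramians

variable {n m p r : Type*} [Fintype n] [Fintype m] [Fintype p] [Fintype r]

theorem transpose_pow_mul_mul_pow [DecidableEq n] [DecidableEq r] (F : Matrix p n ℝ)
    (P : Matrix n n ℝ) (G : Matrix p r ℝ) (Q : Matrix r r ℝ) (k : ℕ) :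
    (Pᵀ) ^ k * (Fᵀ * G) * Q ^ k = (F * P ^ k)ᵀ * (G * Q ^ k) := by
  rw [transpose_mul, transpose_pow]
  simp only [Matrix.mul_assoc]

theorem HasSum.diag_transpose_mul_mul_nonneg [DecidableEq n] {q : Type*} {A : Matrix n n ℝ}
    {C : Matrix p n ℝ} {X : Matrix n n ℝ}
    (h : HasSum (fun k : ℕ => (Aᵀ) ^ k * (Cᵀ * C) * A ^ k) X) (P : Matrix n q ℝ) (i : q) :
    0 ≤ (Pᵀ * X * P) i i := by
  refine (Pi.hasSum.mp (h.matrix_mul_mul Pᵀ P).matrix_diag i).nonneg fun k => ?_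
  rw [transpose_pow_mul_mul_pow, show Pᵀ * ((C * A ^ k)ᵀ * (C * A ^ k)) * P
    = (C * A ^ k * P)ᵀ * (C * A ^ k * P) by simp only [transpose_mul, Matrix.mul_assoc]]
  simp only [diag_apply, mul_apply, transpose_apply]
  exact Finset.sum_nonneg fun j _ => mul_self_nonneg _

theorem trace_mul_diagonal_nonneg [DecidableEq n] {M : Matrix n n ℝ} {d : n → ℝ}
    (hM : ∀ i, 0 ≤ M i i) (hd : ∀ i, 0 ≤ d i) : 0 ≤ trace (M * diagonal d) :=
  Finset.sum_nonneg fun i _ => by simpa [mul_diagonal] using mul_nonneg (hM i) (hd i)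

theorem trace_mul_mul_transpose_mul_transpose (U : Matrix p n ℝ) (V : Matrix n m ℝ)
    (U' : Matrix p r ℝ) (V' : Matrix r m ℝ) :
    trace (U * V * (U' * V')ᵀ) = trace (U'ᵀ * U * (V * V'ᵀ)) := by
  rw [transpose_mul]
  simpa only [Matrix.mul_assoc] using trace_mul_comm (U * V * V'ᵀ) U'ᵀ

theorem trace_sub_mul_transpose_sub (F : Matrix p n ℝ) (B : Matrix n m ℝ) (G : Matrix p r ℝ)
    (B₁ : Matrix r m ℝ) :
    trace ((F * B - G * B₁) * (F * B - G * B₁)ᵀ)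
      = trace (Fᵀ * F * (B * Bᵀ)) - 2 * trace (Fᵀ * G * (B₁ * Bᵀ))
        + trace (Gᵀ * G * (B₁ * B₁ᵀ)) := by
  have hsymm : trace (F * B * (G * B₁)ᵀ) = trace (G * B₁ * (F * B)ᵀ) := by
    rw [← trace_transpose, transpose_mul, transpose_transpose]
  rw [transpose_sub, Matrix.sub_mul, Matrix.mul_sub, Matrix.mul_sub, trace_sub, trace_sub,
    trace_sub, hsymm]
  simp only [trace_mul_mul_transpose_mul_transpose]
  ring

theorem hasSum_trace_markov_error [DecidableEq n] [DecidableEq r] {A : Matrix n n ℝ}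
    {B : Matrix n m ℝ} {C : Matrix p n ℝ} {A₁₁ : Matrix r r ℝ} {B₁ : Matrix r m ℝ}
    {C₁ : Matrix p r ℝ} {Q : Matrix n n ℝ} {Z : Matrix n r ℝ} {Qhat : Matrix r r ℝ}
    (hQ : HasSum (fun k : ℕ => (Aᵀ) ^ k * (Cᵀ * C) * A ^ k) Q)
    (hZ : HasSum (fun k : ℕ => (Aᵀ) ^ k * (Cᵀ * C₁) * A₁₁ ^ k) Z)
    (hQhat : HasSum (fun k : ℕ => (A₁₁ᵀ) ^ k * (C₁ᵀ * C₁) * A₁₁ ^ k) Qhat) :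
    HasSum (fun k : ℕ => trace ((C * A ^ k * B - C₁ * A₁₁ ^ k * B₁) *
        (C * A ^ k * B - C₁ * A₁₁ ^ k * B₁)ᵀ))
      (trace (Q * (B * Bᵀ)) - 2 * trace (Z * (B₁ * Bᵀ)) + trace (Qhat * (B₁ * B₁ᵀ))) := by
  refine (((hQ.matrix_trace_mul (B * Bᵀ)).sub ((hZ.matrix_trace_mul (B₁ * Bᵀ)).mul_left 2)).add
    (hQhat.matrix_trace_mul (B₁ * B₁ᵀ))).congr_fun fun k => ?_
  simp only [trace_sub_mul_transpose_sub, transpose_pow_mul_mul_pow]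

end Gramians

section Compression

/- `J` and `K` embed the retained and the truncated states: `A₁₁ = JᵀAJ`, `A₁₂ = JᵀAK`,
`B₁ = JᵀB`, `C₁ = CJ`. -/
variable {n r s m p : Type*} [Fintype n] [Fintype r] [Fintype s] [Fintype m] [Fintype p]
  {A Sg : Matrix n n ℝ} {B : Matrix n m ℝ} {C : Matrix p n ℝ}
  {J : Matrix n r ℝ} {K : Matrix n s ℝ} {Sg₁ : Matrix r r ℝ} {Sg₂ : Matrix s s ℝ}
  {A₁₁ : Matrix r r ℝ} {A₁₂ : Matrix r s ℝ} {B₁ : Matrix r m ℝ} {C₁ : Matrix p r ℝ}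

theorem trace_mul_mul_transpose_eq_of_stein (hP : A * Sg * Aᵀ - Sg + B * Bᵀ = 0)
    (hQ : Aᵀ * Sg * A - Sg + Cᵀ * C = 0) :
    trace (Sg * (B * Bᵀ)) = trace (C * Sg * Cᵀ) := by
  have hBB : B * Bᵀ = Sg - A * Sg * Aᵀ := by rw [← sub_eq_zero, ← hP]; abel
  have hCC : Cᵀ * C = Sg - Aᵀ * Sg * A := by rw [← sub_eq_zero, ← hQ]; abel
  calc trace (Sg * (B * Bᵀ)) = trace (Sg * Sg) - trace ((Sg * A * Sg) * Aᵀ) := by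
        rw [hBB, Matrix.mul_sub, trace_sub]; simp only [Matrix.mul_assoc]
    _ = trace (Sg * Sg) - trace ((Aᵀ * Sg * A) * Sg) := by
        simpa only [Matrix.mul_assoc] using congrArg _ (trace_mul_comm (Sg * A * Sg) Aᵀ)
    _ = trace (Cᵀ * C * Sg) := by rw [hCC, Matrix.sub_mul, trace_sub]
    _ = trace (C * Sg * Cᵀ) := by
        simpa only [Matrix.mul_assoc] using trace_mul_comm Cᵀ (C * Sg)

theorem trace_mul_mul_transpose_eq_add (hSg : Sg = J * Sg₁ * Jᵀ + K * Sg₂ * Kᵀ) :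
    trace (C * Sg * Cᵀ) = trace (C * J * Sg₁ * (C * J)ᵀ) + trace (C * K * Sg₂ * (C * K)ᵀ) := by
  rw [hSg, Matrix.mul_add, Matrix.add_mul, trace_add]
  simp only [Matrix.transpose_mul, Matrix.mul_assoc]

theorem transpose_mul_mul_eq_of_eq_add (hSg : Sg = J * Sg₁ * Jᵀ + K * Sg₂ * Kᵀ)
    (hA₁₁ : Jᵀ * A * J = A₁₁) (hA₁₂ : Jᵀ * A * K = A₁₂) :
    Jᵀ * A * Sg = A₁₁ * Sg₁ * Jᵀ + A₁₂ * Sg₂ * Kᵀ := by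
  rw [hSg, ← hA₁₁, ← hA₁₂]
  simp only [Matrix.mul_add, Matrix.mul_assoc]

variable [DecidableEq r]

theorem transpose_mul_eq_of_eq_add (hSg : Sg = J * Sg₁ * Jᵀ + K * Sg₂ * Kᵀ)
    (hJ : Jᵀ * J = 1) (hJK : Jᵀ * K = 0) : Jᵀ * Sg = Sg₁ * Jᵀ := by
  rw [hSg, Matrix.mul_add, ← Matrix.mul_assoc, ← Matrix.mul_assoc, hJ, ← Matrix.mul_assoc,
    ← Matrix.mul_assoc, hJK]
  simp

theorem mul_transpose_eq_of_stein (hP : A * Sg * Aᵀ - Sg + B * Bᵀ = 0)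
    (hSg : Sg = J * Sg₁ * Jᵀ + K * Sg₂ * Kᵀ) (hJ : Jᵀ * J = 1) (hJK : Jᵀ * K = 0)
    (hA₁₁ : Jᵀ * A * J = A₁₁) (hA₁₂ : Jᵀ * A * K = A₁₂) (hB₁ : Jᵀ * B = B₁) :
    B₁ * Bᵀ = Sg₁ * Jᵀ - (A₁₁ * Sg₁ * Jᵀ + A₁₂ * Sg₂ * Kᵀ) * Aᵀ := by
  have hBB : B * Bᵀ = Sg - A * Sg * Aᵀ := by rw [← sub_eq_zero, ← hP]; abel
  rw [← transpose_mul_mul_eq_of_eq_add hSg hA₁₁ hA₁₂, ← transpose_mul_eq_of_eq_add hSg hJ hJK,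
    ← hB₁, Matrix.mul_assoc, hBB, Matrix.mul_sub]
  simp only [Matrix.mul_assoc]

theorem mul_transpose_self_eq_of_stein (hP : A * Sg * Aᵀ - Sg + B * Bᵀ = 0)
    (hSg : Sg = J * Sg₁ * Jᵀ + K * Sg₂ * Kᵀ) (hJ : Jᵀ * J = 1) (hJK : Jᵀ * K = 0)
    (hA₁₁ : Jᵀ * A * J = A₁₁) (hA₁₂ : Jᵀ * A * K = A₁₂) (hB₁ : Jᵀ * B = B₁) :
    B₁ * B₁ᵀ = Sg₁ - A₁₁ * Sg₁ * A₁₁ᵀ - A₁₂ * Sg₂ * A₁₂ᵀ := by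
  have h₁₁ : Jᵀ * (Aᵀ * J) = A₁₁ᵀ := by
    rw [← hA₁₁]; simp only [transpose_mul, transpose_transpose, Matrix.mul_assoc]
  have h₁₂ : Kᵀ * (Aᵀ * J) = A₁₂ᵀ := by
    rw [← hA₁₂]; simp only [transpose_mul, transpose_transpose, Matrix.mul_assoc]
  rw [← hB₁, transpose_mul, transpose_transpose, ← Matrix.mul_assoc, hB₁,
    mul_transpose_eq_of_stein hP hSg hJ hJK hA₁₁ hA₁₂ hB₁]
  simp only [Matrix.sub_mul, Matrix.add_mul, Matrix.mul_assoc, hJ, h₁₁, h₁₂, Matrix.mul_one]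
  abel

theorem trace_cross_gramian_mul_eq (hP : A * Sg * Aᵀ - Sg + B * Bᵀ = 0)
    (hSg : Sg = J * Sg₁ * Jᵀ + K * Sg₂ * Kᵀ) (hJ : Jᵀ * J = 1) (hJK : Jᵀ * K = 0)
    (hA₁₁ : Jᵀ * A * J = A₁₁) (hA₁₂ : Jᵀ * A * K = A₁₂) (hB₁ : Jᵀ * B = B₁) (hC₁ : C * J = C₁)
    {Z : Matrix n r ℝ} (hZ : Aᵀ * Z * A₁₁ = Z - Cᵀ * C₁) :
    trace (Z * (B₁ * Bᵀ)) = trace (C₁ * Sg₁ * C₁ᵀ) - trace (A₁₂ * Sg₂ * (A * K)ᵀ * Z) := by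
  have h₁₁ : trace (Z * (A₁₁ * Sg₁ * Jᵀ * Aᵀ))
      = trace (Z * (Sg₁ * Jᵀ)) - trace (C₁ * Sg₁ * C₁ᵀ) := by
    calc trace (Z * (A₁₁ * Sg₁ * Jᵀ * Aᵀ)) = trace (Aᵀ * Z * A₁₁ * (Sg₁ * Jᵀ)) := by
          simpa only [Matrix.mul_assoc] using trace_mul_comm (Z * A₁₁ * Sg₁ * Jᵀ) Aᵀ
      _ = trace (Z * (Sg₁ * Jᵀ)) - trace (Cᵀ * (C₁ * Sg₁ * Jᵀ)) := by
          rw [hZ, Matrix.sub_mul, trace_sub]; simp only [Matrix.mul_assoc]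
      _ = trace (Z * (Sg₁ * Jᵀ)) - trace (C₁ * Sg₁ * C₁ᵀ) := by
          rw [← hC₁, Matrix.transpose_mul]
          simpa only [Matrix.mul_assoc] using congrArg _ (trace_mul_comm Cᵀ (C * J * Sg₁ * Jᵀ))
  have h₁₂ : trace (Z * (A₁₂ * Sg₂ * Kᵀ * Aᵀ)) = trace (A₁₂ * Sg₂ * (A * K)ᵀ * Z) := by
    rw [trace_mul_comm, Matrix.transpose_mul]
    simp only [Matrix.mul_assoc]
  rw [mul_transpose_eq_of_stein hP hSg hJ hJK hA₁₁ hA₁₂ hB₁, Matrix.add_mul, Matrix.mul_sub,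
    Matrix.mul_add, trace_sub, trace_add, h₁₁, h₁₂]
  ring

theorem trace_reduced_gramian_mul_eq (hP : A * Sg * Aᵀ - Sg + B * Bᵀ = 0)
    (hSg : Sg = J * Sg₁ * Jᵀ + K * Sg₂ * Kᵀ) (hJ : Jᵀ * J = 1) (hJK : Jᵀ * K = 0)
    (hA₁₁ : Jᵀ * A * J = A₁₁) (hA₁₂ : Jᵀ * A * K = A₁₂) (hB₁ : Jᵀ * B = B₁)
    {Qhat : Matrix r r ℝ} (hQhat : A₁₁ᵀ * Qhat * A₁₁ = Qhat - C₁ᵀ * C₁) :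
    trace (Qhat * (B₁ * B₁ᵀ)) = trace (C₁ * Sg₁ * C₁ᵀ) - trace (A₁₂ᵀ * Qhat * A₁₂ * Sg₂) := by
  have h₁₁ : trace (Qhat * (A₁₁ * Sg₁ * A₁₁ᵀ))
      = trace (Qhat * Sg₁) - trace (C₁ * Sg₁ * C₁ᵀ) := by
    calc trace (Qhat * (A₁₁ * Sg₁ * A₁₁ᵀ)) = trace (A₁₁ᵀ * Qhat * A₁₁ * Sg₁) := by
          simpa only [Matrix.mul_assoc] using trace_mul_comm (Qhat * A₁₁ * Sg₁) A₁₁ᵀ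
      _ = trace (Qhat * Sg₁) - trace (C₁ᵀ * (C₁ * Sg₁)) := by
          rw [hQhat, Matrix.sub_mul, trace_sub, Matrix.mul_assoc C₁ᵀ]
      _ = trace (Qhat * Sg₁) - trace (C₁ * Sg₁ * C₁ᵀ) := by
          rw [trace_mul_comm C₁ᵀ]
  have h₁₂ : trace (Qhat * (A₁₂ * Sg₂ * A₁₂ᵀ)) = trace (A₁₂ᵀ * Qhat * A₁₂ * Sg₂) := by
    simpa only [Matrix.mul_assoc] using trace_mul_comm (Qhat * A₁₂ * Sg₂) A₁₂ᵀ
  rw [mul_transpose_self_eq_of_stein hP hSg hJ hJK hA₁₁ hA₁₂ hB₁, Matrix.mul_sub, Matrix.mul_sub,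
    trace_sub, trace_sub, h₁₁, h₁₂]
  ring

end Compression

theorem trace_error_eq_of_fromBlocks {r s m p : Type*} [Fintype r] [Fintype s] [Fintype m]
    [Fintype p] [DecidableEq r] [DecidableEq s]
    {A11 : Matrix r r ℝ} {A12 : Matrix r s ℝ} {A21 : Matrix s r ℝ} {A22 : Matrix s s ℝ}
    {B1 : Matrix r m ℝ} {B2 : Matrix s m ℝ} {C1 : Matrix p r ℝ} {C2 : Matrix p s ℝ}
    {σ : r ⊕ s → ℝ} {A : Matrix (r ⊕ s) (r ⊕ s) ℝ} {B : Matrix (r ⊕ s) m ℝ}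
    {C : Matrix p (r ⊕ s) ℝ} (hA : A = fromBlocks A11 A12 A21 A22) (hB : B = fromRows B1 B2)
    (hC : C = fromCols C1 C2)
    (hP : A * diagonal σ * Aᵀ - diagonal σ + B * Bᵀ = 0)
    (hQ : Aᵀ * diagonal σ * A - diagonal σ + Cᵀ * C = 0)
    {Z : Matrix (r ⊕ s) r ℝ} (hZ : Aᵀ * Z * A11 = Z - Cᵀ * C1)
    {Qhat : Matrix r r ℝ} (hQhat : A11ᵀ * Qhat * A11 = Qhat - C1ᵀ * C1) :
    trace (diagonal σ * (B * Bᵀ)) - 2 * trace (Z * (B1 * Bᵀ)) + trace (Qhat * (B1 * B1ᵀ))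
      = trace (C2 * diagonal (fun i => σ (Sum.inr i)) * C2ᵀ)
        + 2 * trace (A12 * diagonal (fun i => σ (Sum.inr i)) * (fromRows A12 A22)ᵀ * Z)
        - trace (A12ᵀ * Qhat * A12 * diagonal fun i => σ (Sum.inr i)) := by
  subst hA hB hC
  set J := fromRows (1 : Matrix r r ℝ) (0 : Matrix s r ℝ)
  set K := fromRows (0 : Matrix r s ℝ) (1 : Matrix s s ℝ)
  have hJ : Jᵀ * J = 1 := by simp [J, transpose_fromRows, fromCols_mul_fromRows]
  have hJK : Jᵀ * K = 0 := by simp [J, K, transpose_fromRows, fromCols_mul_fromRows]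
  have hA₁₁ : Jᵀ * fromBlocks A11 A12 A21 A22 * J = A11 := by
    simp [J, transpose_fromRows, fromCols_mul_fromRows, fromCols_mul_fromBlocks]
  have hA₁₂ : Jᵀ * fromBlocks A11 A12 A21 A22 * K = A12 := by
    simp [J, K, transpose_fromRows, fromCols_mul_fromRows, fromCols_mul_fromBlocks]
  have hA₂ : fromBlocks A11 A12 A21 A22 * K = fromRows A12 A22 := by
    simp [K, fromBlocks_mul_fromRows]
  have hB₁ : Jᵀ * fromRows B1 B2 = B1 := by simp [J, transpose_fromRows, fromCols_mul_fromRows]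
  have hC₁ : fromCols C1 C2 * J = C1 := by simp [J, fromCols_mul_fromRows]
  have hC₂ : fromCols C1 C2 * K = C2 := by simp [K, fromCols_mul_fromRows]
  have hSg : diagonal σ = J * diagonal (fun i => σ (Sum.inl i)) * Jᵀ
      + K * diagonal (fun i => σ (Sum.inr i)) * Kᵀ := by
    ext (i | i) (j | j) <;> simp [J, K, transpose_fromRows, fromRows_mul, diagonal_apply]
  rw [trace_mul_mul_transpose_eq_of_stein hP hQ, trace_mul_mul_transpose_eq_add hSg, hC₁, hC₂,
    trace_cross_gramian_mul_eq hP hSg hJ hJK hA₁₁ hA₁₂ hB₁ hC₁ hZ,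
    trace_reduced_gramian_mul_eq hP hSg hJ hJK hA₁₁ hA₁₂ hB₁ hQhat, hA₂]
  ring

/-- For a stable balanced system with stable truncated block
`A₁₁`, the series `Z_∞ = Σ_{j=1}^{∞} (Aᵀ)^{j-1} Cᵀ C₁ A₁₁^{j-1}` converges and
the squared infinite-horizon h₂ error of balanced truncation satisfies
`Σ_{j=1}^{∞} ‖C A^{j-1} B − C₁ A₁₁^{j-1} B₁‖_F²
  ≤ trace(C₂ Σ₂,∞ C₂ᵀ) + 2 trace(A₁₂ Σ₂,∞ A_{:2}ᵀ Z_∞)`. -/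
theorem bt_infinite_horizon_h2_error_upper_bound
    {m p r s : ℕ}
    (A11 : Matrix (Fin r) (Fin r) ℝ) (A12 : Matrix (Fin r) (Fin s) ℝ)
    (A21 : Matrix (Fin s) (Fin r) ℝ) (A22 : Matrix (Fin s) (Fin s) ℝ)
    (B1 : Matrix (Fin r) (Fin m) ℝ) (B2 : Matrix (Fin s) (Fin m) ℝ)
    (C1 : Matrix (Fin p) (Fin r) ℝ) (C2 : Matrix (Fin p) (Fin s) ℝ)
    (σ : Fin r ⊕ Fin s → ℝ)
    (A : Matrix (Fin r ⊕ Fin s) (Fin r ⊕ Fin s) ℝ)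
    (B : Matrix (Fin r ⊕ Fin s) (Fin m) ℝ)
    (C : Matrix (Fin p) (Fin r ⊕ Fin s) ℝ)
    (hA : A = Matrix.fromBlocks A11 A12 A21 A22)
    (hB : B = Matrix.fromRows B1 B2)
    (hC : C = Matrix.fromCols C1 C2)
    (Sg : Matrix (Fin r ⊕ Fin s) (Fin r ⊕ Fin s) ℝ) (hSg : Sg = Matrix.diagonal σ)
    (Sg2 : Matrix (Fin s) (Fin s) ℝ) (hSg2 : Sg2 = Matrix.diagonal fun i => σ (Sum.inr i))
    -- A and A₁₁ are stable
    (hstabA : ∀ μ ∈ spectrum ℂ (A.map Complex.ofReal), ‖μ‖ < 1)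
    (hstabA11 : ∀ μ ∈ spectrum ℂ (A11.map Complex.ofReal), ‖μ‖ < 1)
    -- the system is balanced (infinite horizon)
    (hbalP : A * Sg * Aᵀ - Sg + B * Bᵀ = 0)
    (hbalQ : Aᵀ * Sg * A - Sg + Cᵀ * C = 0) :
    Summable (fun j : ℕ => (Aᵀ) ^ j * Cᵀ * C1 * A11 ^ j) ∧
    Summable (fun j : ℕ =>
      Matrix.trace ((C * A ^ j * B - C1 * A11 ^ j * B1) *
        (C * A ^ j * B - C1 * A11 ^ j * B1)ᵀ)) ∧
    ∑' j : ℕ,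
        Matrix.trace ((C * A ^ j * B - C1 * A11 ^ j * B1) *
          (C * A ^ j * B - C1 * A11 ^ j * B1)ᵀ)
      ≤ Matrix.trace (C2 * Sg2 * C2ᵀ)
        + 2 * Matrix.trace (A12 * Sg2 * (Matrix.fromRows A12 A22)ᵀ *
            (∑' j : ℕ, (Aᵀ) ^ j * Cᵀ * C1 * A11 ^ j)) := by
  subst hSg hSg2
  have hQ : HasSum (fun k : ℕ => (Aᵀ) ^ k * (Cᵀ * C) * A ^ k) (diagonal σ) :=
    IsSchurStable.hasSum_of_stein hstabA hbalQ
  obtain ⟨Z, hZ⟩ := IsSchurStable.summable_transpose_pow_mul_mul_pow hstabA hstabA11 (Cᵀ * C1)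
  obtain ⟨Qhat, hQhat⟩ :=
    IsSchurStable.summable_transpose_pow_mul_mul_pow hstabA11 hstabA11 (C1ᵀ * C1)
  have hZform : (fun k : ℕ => (Aᵀ) ^ k * Cᵀ * C1 * A11 ^ k)
      = fun k : ℕ => (Aᵀ) ^ k * (Cᵀ * C1) * A11 ^ k := by
    simp only [Matrix.mul_assoc]
  have herr := hasSum_trace_markov_error (B := B) (B₁ := B1) hQ hZ hQhat
  have hσ : ∀ i, 0 ≤ σ (Sum.inr i) := fun i => by
    simpa using
      hQ.diag_transpose_mul_mul_nonneg (1 : Matrix (Fin r ⊕ Fin s) (Fin r ⊕ Fin s) ℝ) (Sum.inr i)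
  have hgram : 0 ≤ trace (A12ᵀ * Qhat * A12 * diagonal fun i => σ (Sum.inr i)) :=
    trace_mul_diagonal_nonneg (hQhat.diag_transpose_mul_mul_nonneg A12) hσ
  refine ⟨hZform ▸ hZ.summable, herr.summable, ?_⟩
  rw [herr.tsum_eq, hZform, hZ.tsum_eq,
    trace_error_eq_of_fromBlocks hA hB hC hbalP hbalQ hZ.stein hQhat.stein]
  linarith
end

section
/- Let A ∈ ℝ^{n×n} be stable, i.e., every complex eigenvalue of A has modulus strictly less than 1, and let B ∈ ℝ^{n×m}. Then the series P_∞ = Σ_{k=1}^{∞} A^{k-1} B Bᵀ (Aᵀ)^{k-1} converges, and its sum satisfies the Stein (discrete-time Lyapunov) equation A P_∞ Aᵀ − P_∞ + B Bᵀ = 0; moreover P_∞ is the unique solution of this equation. -/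
/-!
The Stein operator `X ↦ A X Aᵀ` has iterates `X ↦ Aᵏ X (Aᵀ)ᵏ`. By Gelfand's formula, a spectral
radius below `1` makes `‖Aᵏ‖` decay geometrically, so `∑ Aᵏ X (Aᵀ)ᵏ` converges for every `X`.
Peeling off the `k = 0` term shows that the sum with `X = B Bᵀ` solves the Stein equation, and
iterating the equation `N` times writes any solution `P` as `Aᴺ P (Aᵀ)ᴺ` plus a partial sum of the
same series; the first term tends to `0` because the series for `X = P` converges too.
-/

open Matrix Filter Topology

section Stein

variable {R : Type*} [Ring R] {a b m p : R}

theorem eq_pow_mul_mul_pow_add_sum_of_mul_mul_add_eq (h : a * p * b + m = p) (N : ℕ) :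
    p = a ^ N * p * b ^ N + ∑ k ∈ Finset.range N, a ^ k * m * b ^ k := by
  induction N with
  | zero => simp
  | succ N ih =>
    calc p = a ^ N * (a * p * b + m) * b ^ N + ∑ k ∈ Finset.range N, a ^ k * m * b ^ k := by
          rwa [h]
      _ = _ := by
          rw [Finset.sum_range_succ, pow_succ a, pow_succ' b]
          simp only [mul_add, add_mul, mul_assoc]
          abel

variable [TopologicalSpace R] [IsTopologicalRing R] [T2Space R]

theorem mul_tsum_pow_mul_mul_pow_mul_add (hs : Summable fun k ↦ a ^ k * m * b ^ k) :
    a * (∑' k, a ^ k * m * b ^ k) * b + m = ∑' k, a ^ k * m * b ^ k := by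
  conv_rhs => rw [hs.tsum_eq_zero_add]
  rw [← hs.tsum_mul_left, ← (hs.mul_left a).tsum_mul_right, add_comm]
  simp only [pow_zero, one_mul, mul_one, pow_succ' a, pow_succ b, mul_assoc]

theorem eq_tsum_pow_mul_mul_pow (hs : Summable fun k ↦ a ^ k * m * b ^ k)
    (hp : Tendsto (fun k ↦ a ^ k * p * b ^ k) atTop (𝓝 0)) (h : a * p * b + m = p) :
    p = ∑' k, a ^ k * m * b ^ k := by
  have hlim := hp.add hs.hasSum.tendsto_sum_nat
  rw [← funext (eq_pow_mul_mul_pow_add_sum_of_mul_mul_add_eq h), zero_add] at hlim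
  exact tendsto_nhds_unique tendsto_const_nhds hlim

end Stein

theorem summable_pow_mul_mul_pow {R : Type*} [NormedRing R] [CompleteSpace R] {a b : R}
    (ha : Summable fun k ↦ ‖a ^ k‖) (hb : Summable fun k ↦ ‖b ^ k‖) (x : R) :
    Summable fun k ↦ a ^ k * x * b ^ k := by
  refine .of_norm_bounded_eventually (ha.mul_right ‖x‖) ?_
  rw [Nat.cofinite_eq_atTop]
  filter_upwards [hb.tendsto_atTop_zero.eventually_le_const zero_lt_one] with k hk
  calc ‖a ^ k * x * b ^ k‖ ≤ ‖a ^ k‖ * ‖x‖ * ‖b ^ k‖ := norm_mul₃_le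
    _ ≤ ‖a ^ k‖ * ‖x‖ := mul_le_of_le_one_right (by positivity) hk

theorem spectralRadius_lt_one_of_forall_norm_lt_one {𝕜 A : Type*} [NormedField 𝕜]
    [ProperSpace 𝕜] [NormedRing A] [NormedAlgebra 𝕜 A] [CompleteSpace A] {a : A}
    (h : ∀ μ ∈ spectrum 𝕜 a, ‖μ‖ < 1) :
    spectralRadius 𝕜 a < 1 := by
  rcases (spectrum 𝕜 a).eq_empty_or_nonempty with hσ | hσ
  · simp [spectralRadius, hσ]
  · exact_mod_cast spectrum.spectralRadius_lt_of_forall_lt_of_nonempty hσ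
      fun μ hμ ↦ by exact_mod_cast h μ hμ

theorem summable_norm_pow_of_spectralRadius_lt_one {A : Type*} [NormedRing A]
    [NormedAlgebra ℂ A] [CompleteSpace A] {a : A} (ha : spectralRadius ℂ a < 1) :
    Summable fun k ↦ ‖a ^ k‖ := by
  obtain ⟨r, hρr, hr1⟩ := ENNReal.lt_iff_exists_nnreal_btwn.1 ha
  refine .of_norm_bounded_eventually
    (summable_geometric_of_lt_one r.coe_nonneg (by exact_mod_cast hr1)) ?_
  rw [Nat.cofinite_eq_atTop]
  filter_upwards [(spectrum.gelfand_formula a).eventually_lt_const hρr, eventually_gt_atTop 0]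
    with k hk hk0
  rw [one_div, ENNReal.rpow_inv_lt_iff (by positivity), ENNReal.rpow_natCast] at hk
  rw [norm_norm]
  exact_mod_cast hk.le

section Frobenius

attribute [local instance] Matrix.frobeniusNormedAddCommGroup Matrix.frobeniusNormedRing
  Matrix.frobeniusNormedAlgebra

variable {ι : Type*} [Fintype ι] [DecidableEq ι]

theorem Matrix.frobenius_norm_map_ofReal_pow (A : Matrix ι ι ℝ) (k : ℕ) :
    ‖A.map Complex.ofReal ^ k‖ = ‖A ^ k‖ :=
  (congrArg norm (map_pow Complex.ofRealHom.mapMatrix A k).symm).trans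
    (frobenius_norm_map_eq _ _ Complex.norm_real)

theorem Matrix.summable_pow_mul_mul_transpose_pow (A : Matrix ι ι ℝ)
    (hA : ∀ μ ∈ spectrum ℂ (A.map Complex.ofReal), ‖μ‖ < 1) (X : Matrix ι ι ℝ) :
    Summable fun k ↦ A ^ k * X * Aᵀ ^ k := by
  have hsum : Summable fun k ↦ ‖A ^ k‖ := by
    simpa only [frobenius_norm_map_ofReal_pow] using summable_norm_pow_of_spectralRadius_lt_one
      (spectralRadius_lt_one_of_forall_norm_lt_one hA)
  refine summable_pow_mul_mul_pow hsum ?_ X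
  simpa only [← transpose_pow, frobenius_norm_transpose] using hsum

end Frobenius

/-- For a stable matrix `A` (all complex eigenvalues of modulus
`< 1`) and `B ∈ ℝ^{n×m}`, the series `P_∞ = Σ_{k=1}^{∞} A^{k-1} B Bᵀ (Aᵀ)^{k-1}`
converges, its sum satisfies the Stein equation `A P_∞ Aᵀ − P_∞ + B Bᵀ = 0`,
and `P_∞` is the unique solution of this equation. -/
theorem infinite_gramian_exists_unique
    {n m : ℕ}
    (A : Matrix (Fin n) (Fin n) ℝ) (B : Matrix (Fin n) (Fin m) ℝ)
    (hstab : ∀ μ ∈ spectrum ℂ (A.map Complex.ofReal), ‖μ‖ < 1) :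
    Summable (fun k : ℕ => A ^ k * B * Bᵀ * (Aᵀ) ^ k) ∧
    A * (∑' k : ℕ, A ^ k * B * Bᵀ * (Aᵀ) ^ k) * Aᵀ
        - (∑' k : ℕ, A ^ k * B * Bᵀ * (Aᵀ) ^ k) + B * Bᵀ = 0 ∧
    ∀ P : Matrix (Fin n) (Fin n) ℝ,
      A * P * Aᵀ - P + B * Bᵀ = 0 →
      P = ∑' k : ℕ, A ^ k * B * Bᵀ * (Aᵀ) ^ k := by
  have hsum := A.summable_pow_mul_mul_transpose_pow hstab
  simp only [Matrix.mul_assoc _ B Bᵀ, sub_add_eq_add_sub, sub_eq_zero]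
  exact ⟨hsum _, mul_tsum_pow_mul_mul_pow_mul_add (hsum _), fun P hP ↦
    eq_tsum_pow_mul_mul_pow (hsum _) (hsum P).tendsto_atTop_zero hP⟩
end
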